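/- For the instance I*: for every probability distribution q on the facility set F, there exists a pseudometric d on C ∪ F that is consistent with σ* such that OPT(d) > 0 and Σ_{i∈F} q(i) · Σ_{j∈C} d(i,j) ≥ 2.063164 · OPT(d). In other words, sup_{d ◁ σ*, OPT(d)>0} cost_d(q)/OPT(d) ≥ 2.063164 for every distribution q. -/
import Mathlib


/-- Points of the instance: `Sum.inl j` is client `j`, `Sum.inr i` is facility `i`. -/
abbrev Pt := Fin 7 ⊕ Fin 7

/-- `d` is a pseudometric: nonnegative, symmetric, zero on the diagonal,
and satisfying the triangle inequality `d x y ≤ d x z + d y z`. -/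
def IsPseudometric (d : Pt → Pt → ℝ) : Prop :=
  (∀ x y, 0 ≤ d x y) ∧ (∀ x y, d x y = d y x) ∧ (∀ x, d x x = 0) ∧
    (∀ x y z, d x y ≤ d x z + d y z)

/-- Rank function of the instance `I*` (facilities `a,…,g` are `0,…,6`):
clients 1,2,3 rank c ≻ e ≻ b ≻ a ≻ f ≻ g ≻ d, clients 4,5,6 rank
d ≻ g ≻ f ≻ a ≻ e ≻ b ≻ c, client 7 ranks b ≻ a ≻ f ≻ g ≻ e ≻ c ≻ d. -/
def rkStar (j : Fin 7) : Fin 7 → ℕ :=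
  if j.val ≤ 2 then ![3, 2, 0, 6, 1, 4, 5]
  else if j.val ≤ 5 then ![3, 5, 6, 0, 4, 2, 1]
  else ![1, 0, 5, 6, 4, 2, 3]

/-- The preference profile `σ*` of the instance `I*`: `a ≽_j b` iff `a` has
(weakly) smaller rank than `b` in client `j`'s list. -/
def sigmaStar (j : Fin 7) (a b : Fin 7) : Prop := rkStar j a ≤ rkStar j b

/-- `d` is consistent with the profile `σ`: whenever client `j` prefers `a` to `b`,
facility `a` is at least as close to `j` as `b`. -/
def Consistent (d : Pt → Pt → ℝ) (σ : Fin 7 → Fin 7 → Fin 7 → Prop) : Prop :=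
  ∀ j a b, σ j a b → d (Sum.inr a) (Sum.inl j) ≤ d (Sum.inr b) (Sum.inl j)

/-- Expected social cost of the distribution `q` under metric `d`. -/
def cost (d : Pt → Pt → ℝ) (q : Fin 7 → ℝ) : ℝ :=
  ∑ i, q i * ∑ j, d (Sum.inr i) (Sum.inl j)

/-- Total cost of the clients if facility `o` is chosen. -/
def facCost (d : Pt → Pt → ℝ) (o : Fin 7) : ℝ :=
  ∑ j, d (Sum.inr o) (Sum.inl j)

/-- Optimal (minimum) total cost over all facilities. -/
noncomputable def OPT (d : Pt → Pt → ℝ) : ℝ :=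
  Finset.univ.inf' Finset.univ_nonempty (facCost d)

/-- For the instance `I*`, every probability distribution `q` on the
facilities admits a pseudometric `d` consistent with `σ*` with `OPT d > 0` and
`cost d q ≥ 2.063164 · OPT d`; hence the best achievable ratio is at least 2.063164. -/
def m0 : Fin 14 → Fin 14 → ℕ :=
  ![![0, 2, 2, 2, 2, 2, 2, 1, 1, 1, 3, 1, 3, 3],
    ![2, 0, 2, 2, 2, 2, 2, 1, 1, 1, 3, 1, 3, 3],
    ![2, 2, 0, 2, 2, 2, 2, 1, 1, 1, 3, 1, 3, 3],
    ![2, 2, 2, 0, 2, 2, 2, 1, 3, 3, 1, 3, 1, 1],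
    ![2, 2, 2, 2, 0, 2, 2, 1, 3, 3, 1, 3, 1, 1],
    ![2, 2, 2, 2, 2, 0, 2, 1, 3, 3, 1, 3, 1, 1],
    ![2, 2, 2, 2, 2, 2, 0, 1, 1, 3, 3, 3, 3, 3],
    ![1, 1, 1, 1, 1, 1, 1, 0, 2, 2, 2, 2, 2, 2],
    ![1, 1, 1, 3, 3, 3, 1, 2, 0, 2, 4, 2, 4, 4],
    ![1, 1, 1, 3, 3, 3, 3, 2, 2, 0, 4, 2, 4, 4],
    ![3, 3, 3, 1, 1, 1, 3, 2, 4, 4, 0, 4, 2, 2],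
    ![1, 1, 1, 3, 3, 3, 3, 2, 2, 2, 4, 0, 4, 4],
    ![3, 3, 3, 1, 1, 1, 3, 2, 4, 4, 2, 4, 0, 2],
    ![3, 3, 3, 1, 1, 1, 3, 2, 4, 4, 2, 4, 2, 0]]

def m1 : Fin 14 → Fin 14 → ℕ :=
  ![![0, 2, 2, 2, 2, 2, 1, 3, 1, 1, 3, 1, 3, 3],
    ![2, 0, 2, 2, 2, 2, 1, 3, 1, 1, 3, 1, 3, 3],
    ![2, 2, 0, 2, 2, 2, 1, 3, 1, 1, 3, 1, 3, 3],
    ![2, 2, 2, 0, 2, 2, 1, 1, 1, 3, 1, 1, 1, 1],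
    ![2, 2, 2, 2, 0, 2, 1, 1, 1, 3, 1, 1, 1, 1],
    ![2, 2, 2, 2, 2, 0, 1, 1, 1, 3, 1, 1, 1, 1],
    ![1, 1, 1, 1, 1, 1, 0, 2, 0, 2, 2, 2, 2, 2],
    ![3, 3, 3, 1, 1, 1, 2, 0, 2, 4, 2, 2, 2, 2],
    ![1, 1, 1, 1, 1, 1, 0, 2, 0, 2, 2, 2, 2, 2],
    ![1, 1, 1, 3, 3, 3, 2, 4, 2, 0, 4, 2, 4, 4],
    ![3, 3, 3, 1, 1, 1, 2, 2, 2, 4, 0, 2, 2, 2],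
    ![1, 1, 1, 1, 1, 1, 2, 2, 2, 2, 2, 0, 2, 2],
    ![3, 3, 3, 1, 1, 1, 2, 2, 2, 4, 2, 2, 0, 2],
    ![3, 3, 3, 1, 1, 1, 2, 2, 2, 4, 2, 2, 2, 0]]

def m2 : Fin 14 → Fin 14 → ℕ :=
  ![![0, 0, 0, 1, 1, 1, 1, 2, 2, 0, 2, 2, 2, 2],
    ![0, 0, 0, 1, 1, 1, 1, 2, 2, 0, 2, 2, 2, 2],
    ![0, 0, 0, 1, 1, 1, 1, 2, 2, 0, 2, 2, 2, 2],
    ![1, 1, 1, 0, 2, 2, 2, 1, 1, 1, 1, 1, 1, 1],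
    ![1, 1, 1, 2, 0, 2, 2, 1, 1, 1, 1, 1, 1, 1],
    ![1, 1, 1, 2, 2, 0, 2, 1, 1, 1, 1, 1, 1, 1],
    ![1, 1, 1, 2, 2, 2, 0, 1, 1, 1, 3, 1, 1, 1],
    ![2, 2, 2, 1, 1, 1, 1, 0, 2, 2, 2, 2, 2, 2],
    ![2, 2, 2, 1, 1, 1, 1, 2, 0, 2, 2, 2, 2, 2],
    ![0, 0, 0, 1, 1, 1, 1, 2, 2, 0, 2, 2, 2, 2],
    ![2, 2, 2, 1, 1, 1, 3, 2, 2, 2, 0, 2, 2, 2],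
    ![2, 2, 2, 1, 1, 1, 1, 2, 2, 2, 2, 0, 2, 2],
    ![2, 2, 2, 1, 1, 1, 1, 2, 2, 2, 2, 2, 0, 2],
    ![2, 2, 2, 1, 1, 1, 1, 2, 2, 2, 2, 2, 2, 0]]

def m3 : Fin 14 → Fin 14 → ℕ :=
  ![![0, 2, 2, 1, 1, 1, 2, 1, 1, 1, 1, 1, 1, 1],
    ![2, 0, 2, 1, 1, 1, 2, 1, 1, 1, 1, 1, 1, 1],
    ![2, 2, 0, 1, 1, 1, 2, 1, 1, 1, 1, 1, 1, 1],
    ![1, 1, 1, 0, 0, 0, 1, 2, 2, 2, 0, 2, 2, 2],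
    ![1, 1, 1, 0, 0, 0, 1, 2, 2, 2, 0, 2, 2, 2],
    ![1, 1, 1, 0, 0, 0, 1, 2, 2, 2, 0, 2, 2, 2],
    ![2, 2, 2, 1, 1, 1, 0, 1, 1, 1, 1, 1, 1, 1],
    ![1, 1, 1, 2, 2, 2, 1, 0, 2, 2, 2, 2, 2, 2],
    ![1, 1, 1, 2, 2, 2, 1, 2, 0, 2, 2, 2, 2, 2],
    ![1, 1, 1, 2, 2, 2, 1, 2, 2, 0, 2, 2, 2, 2],
    ![1, 1, 1, 0, 0, 0, 1, 2, 2, 2, 0, 2, 2, 2],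
    ![1, 1, 1, 2, 2, 2, 1, 2, 2, 2, 2, 0, 2, 2],
    ![1, 1, 1, 2, 2, 2, 1, 2, 2, 2, 2, 2, 0, 2],
    ![1, 1, 1, 2, 2, 2, 1, 2, 2, 2, 2, 2, 2, 0]]

def m4 : Fin 14 → Fin 14 → ℕ :=
  ![![0, 2, 2, 2, 2, 2, 2, 3, 3, 1, 3, 1, 3, 3],
    ![2, 0, 2, 2, 2, 2, 2, 3, 3, 1, 3, 1, 3, 3],
    ![2, 2, 0, 2, 2, 2, 2, 3, 3, 1, 3, 1, 3, 3],
    ![2, 2, 2, 0, 2, 2, 2, 1, 3, 3, 1, 1, 1, 1],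
    ![2, 2, 2, 2, 0, 2, 2, 1, 3, 3, 1, 1, 1, 1],
    ![2, 2, 2, 2, 2, 0, 2, 1, 3, 3, 1, 1, 1, 1],
    ![2, 2, 2, 2, 2, 2, 0, 1, 1, 3, 3, 1, 1, 1],
    ![3, 3, 3, 1, 1, 1, 1, 0, 2, 4, 2, 2, 2, 2],
    ![3, 3, 3, 3, 3, 3, 1, 2, 0, 4, 4, 2, 2, 2],
    ![1, 1, 1, 3, 3, 3, 3, 4, 4, 0, 4, 2, 4, 4],
    ![3, 3, 3, 1, 1, 1, 3, 2, 4, 4, 0, 2, 2, 2],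
    ![1, 1, 1, 1, 1, 1, 1, 2, 2, 2, 2, 0, 2, 2],
    ![3, 3, 3, 1, 1, 1, 1, 2, 2, 4, 2, 2, 0, 2],
    ![3, 3, 3, 1, 1, 1, 1, 2, 2, 4, 2, 2, 2, 0]]

def m5 : Fin 14 → Fin 14 → ℕ :=
  ![![0, 2, 2, 2, 2, 2, 2, 1, 1, 1, 3, 1, 1, 3],
    ![2, 0, 2, 2, 2, 2, 2, 1, 1, 1, 3, 1, 1, 3],
    ![2, 2, 0, 2, 2, 2, 2, 1, 1, 1, 3, 1, 1, 3],
    ![2, 2, 2, 0, 2, 2, 2, 3, 3, 3, 1, 3, 1, 1],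
    ![2, 2, 2, 2, 0, 2, 2, 3, 3, 3, 1, 3, 1, 1],
    ![2, 2, 2, 2, 2, 0, 2, 3, 3, 3, 1, 3, 1, 1],
    ![2, 2, 2, 2, 2, 2, 0, 1, 1, 3, 3, 3, 1, 3],
    ![1, 1, 1, 3, 3, 3, 1, 0, 2, 2, 4, 2, 2, 4],
    ![1, 1, 1, 3, 3, 3, 1, 2, 0, 2, 4, 2, 2, 4],
    ![1, 1, 1, 3, 3, 3, 3, 2, 2, 0, 4, 2, 2, 4],
    ![3, 3, 3, 1, 1, 1, 3, 4, 4, 4, 0, 4, 2, 2],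
    ![1, 1, 1, 3, 3, 3, 3, 2, 2, 2, 4, 0, 2, 4],
    ![1, 1, 1, 1, 1, 1, 1, 2, 2, 2, 2, 2, 0, 2],
    ![3, 3, 3, 1, 1, 1, 3, 4, 4, 4, 2, 4, 2, 0]]

def m6 : Fin 14 → Fin 14 → ℕ :=
  ![![0, 2, 2, 2, 2, 2, 2, 1, 1, 1, 3, 1, 1, 1],
    ![2, 0, 2, 2, 2, 2, 2, 1, 1, 1, 3, 1, 1, 1],
    ![2, 2, 0, 2, 2, 2, 2, 1, 1, 1, 3, 1, 1, 1],
    ![2, 2, 2, 0, 2, 2, 2, 3, 3, 3, 1, 3, 3, 1],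
    ![2, 2, 2, 2, 0, 2, 2, 3, 3, 3, 1, 3, 3, 1],
    ![2, 2, 2, 2, 2, 0, 2, 3, 3, 3, 1, 3, 3, 1],
    ![2, 2, 2, 2, 2, 2, 0, 1, 1, 3, 3, 3, 1, 1],
    ![1, 1, 1, 3, 3, 3, 1, 0, 2, 2, 4, 2, 2, 2],
    ![1, 1, 1, 3, 3, 3, 1, 2, 0, 2, 4, 2, 2, 2],
    ![1, 1, 1, 3, 3, 3, 3, 2, 2, 0, 4, 2, 2, 2],
    ![3, 3, 3, 1, 1, 1, 3, 4, 4, 4, 0, 4, 4, 2],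
    ![1, 1, 1, 3, 3, 3, 3, 2, 2, 2, 4, 0, 2, 2],
    ![1, 1, 1, 3, 3, 3, 1, 2, 2, 2, 4, 2, 0, 2],
    ![1, 1, 1, 1, 1, 1, 1, 2, 2, 2, 2, 2, 2, 0]]

def idx : Pt → Fin 14
  | Sum.inl j => j.castLE (by omega)
  | Sum.inr i => ⟨i.val + 7, by omega⟩

noncomputable def dm (m : Fin 14 → Fin 14 → ℕ) : Pt → Pt → ℝ :=
  fun x y => ((m (idx x) (idx y) : ℕ) : ℝ)

theorem pseudo_of_nat (m : Fin 14 → Fin 14 → ℕ)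
    (hsymm : ∀ a b, m a b = m b a) (hdiag : ∀ a, m a a = 0)
    (htri : ∀ a b c, m a b ≤ m a c + m b c) :
    IsPseudometric (dm m) := by
  refine ⟨fun x y => ?_, fun x y => ?_, fun x => ?_, fun x y z => ?_⟩ <;> simp only [dm]
  · exact Nat.cast_nonneg _
  · exact_mod_cast congrArg (fun n => ((n : ℕ) : ℝ)) (hsymm (idx x) (idx y))
  · exact_mod_cast hdiag (idx x)
  · exact_mod_cast htri (idx x) (idx y) (idx z)

theorem consistent_of_nat (m : Fin 14 → Fin 14 → ℕ)
    (h : ∀ j a b : Fin 7, rkStar j a ≤ rkStar j b →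
      m (idx (Sum.inr a)) (idx (Sum.inl j)) ≤ m (idx (Sum.inr b)) (idx (Sum.inl j))) :
    Consistent (dm m) sigmaStar := by
  intro j a b hab
  simp only [dm]
  exact_mod_cast h j a b hab

theorem facCost_of_nat (m : Fin 14 → Fin 14 → ℕ) (i : Fin 7) (v : ℕ)
    (h : (∑ j, m (idx (Sum.inr i)) (idx (Sum.inl j))) = v) :
    facCost (dm m) i = (v : ℝ) := by
  simp only [facCost, dm]
  rw [← Nat.cast_sum, h]

theorem OPT_of_nat (m : Fin 14 → Fin 14 → ℕ) (o : Fin 7) (v : ℕ)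
    (ho : (∑ j, m (idx (Sum.inr o)) (idx (Sum.inl j))) = v)
    (hall : ∀ i : Fin 7, v ≤ ∑ j, m (idx (Sum.inr i)) (idx (Sum.inl j))) :
    OPT (dm m) = (v : ℝ) := by
  apply le_antisymm
  · have h := Finset.inf'_le (facCost (dm m)) (Finset.mem_univ o)
    rw [facCost_of_nat m o v ho] at h
    exact h
  · apply Finset.le_inf'
    intro b _
    rw [facCost_of_nat m b (∑ j, m (idx (Sum.inr b)) (idx (Sum.inl j))) rfl]
    exact_mod_cast hall b

theorem cost_eq (d : Pt → Pt → ℝ) (q : Fin 7 → ℝ) :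
    cost d q = ∑ i, q i * facCost d i := rfl


theorem pseudo0 : IsPseudometric (dm m0) :=
  pseudo_of_nat m0 (by decide) (by decide) (by decide)

theorem cons0 : Consistent (dm m0) sigmaStar :=
  consistent_of_nat m0 (by decide)

theorem hfc0_0 : facCost (dm m0) (0 : Fin 7) = (7 : ℝ) := by
  have h := facCost_of_nat m0 0 7 (by decide)
  exact_mod_cast h

theorem hfc0_1 : facCost (dm m0) (1 : Fin 7) = (13 : ℝ) := by
  have h := facCost_of_nat m0 1 13 (by decide)
  exact_mod_cast h

theorem hfc0_2 : facCost (dm m0) (2 : Fin 7) = (15 : ℝ) := by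
  have h := facCost_of_nat m0 2 15 (by decide)
  exact_mod_cast h

theorem hfc0_3 : facCost (dm m0) (3 : Fin 7) = (15 : ℝ) := by
  have h := facCost_of_nat m0 3 15 (by decide)
  exact_mod_cast h

theorem hfc0_4 : facCost (dm m0) (4 : Fin 7) = (15 : ℝ) := by
  have h := facCost_of_nat m0 4 15 (by decide)
  exact_mod_cast h

theorem hfc0_5 : facCost (dm m0) (5 : Fin 7) = (15 : ℝ) := by
  have h := facCost_of_nat m0 5 15 (by decide)
  exact_mod_cast h

theorem hfc0_6 : facCost (dm m0) (6 : Fin 7) = (15 : ℝ) := by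
  have h := facCost_of_nat m0 6 15 (by decide)
  exact_mod_cast h

theorem hOPT0 : OPT (dm m0) = (7 : ℝ) := by
  have h := OPT_of_nat m0 0 7 (by decide) (by decide)
  exact_mod_cast h


theorem pseudo1 : IsPseudometric (dm m1) :=
  pseudo_of_nat m1 (by decide) (by decide) (by decide)

theorem cons1 : Consistent (dm m1) sigmaStar :=
  consistent_of_nat m1 (by decide)

theorem hfc1_0 : facCost (dm m1) (0 : Fin 7) = (14 : ℝ) := by
  have h := facCost_of_nat m1 0 14 (by decide)
  exact_mod_cast h

theorem hfc1_1 : facCost (dm m1) (1 : Fin 7) = (6 : ℝ) := by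
  have h := facCost_of_nat m1 1 6 (by decide)
  exact_mod_cast h

theorem hfc1_2 : facCost (dm m1) (2 : Fin 7) = (14 : ℝ) := by
  have h := facCost_of_nat m1 2 14 (by decide)
  exact_mod_cast h

theorem hfc1_3 : facCost (dm m1) (3 : Fin 7) = (14 : ℝ) := by
  have h := facCost_of_nat m1 3 14 (by decide)
  exact_mod_cast h

theorem hfc1_4 : facCost (dm m1) (4 : Fin 7) = (8 : ℝ) := by
  have h := facCost_of_nat m1 4 8 (by decide)
  exact_mod_cast h

theorem hfc1_5 : facCost (dm m1) (5 : Fin 7) = (14 : ℝ) := by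
  have h := facCost_of_nat m1 5 14 (by decide)
  exact_mod_cast h

theorem hfc1_6 : facCost (dm m1) (6 : Fin 7) = (14 : ℝ) := by
  have h := facCost_of_nat m1 6 14 (by decide)
  exact_mod_cast h

theorem hOPT1 : OPT (dm m1) = (6 : ℝ) := by
  have h := OPT_of_nat m1 1 6 (by decide) (by decide)
  exact_mod_cast h


theorem pseudo2 : IsPseudometric (dm m2) :=
  pseudo_of_nat m2 (by decide) (by decide) (by decide)

theorem cons2 : Consistent (dm m2) sigmaStar :=
  consistent_of_nat m2 (by decide)

theorem hfc2_0 : facCost (dm m2) (0 : Fin 7) = (10 : ℝ) := by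
  have h := facCost_of_nat m2 0 10 (by decide)
  exact_mod_cast h

theorem hfc2_1 : facCost (dm m2) (1 : Fin 7) = (10 : ℝ) := by
  have h := facCost_of_nat m2 1 10 (by decide)
  exact_mod_cast h

theorem hfc2_2 : facCost (dm m2) (2 : Fin 7) = (4 : ℝ) := by
  have h := facCost_of_nat m2 2 4 (by decide)
  exact_mod_cast h

theorem hfc2_3 : facCost (dm m2) (3 : Fin 7) = (12 : ℝ) := by
  have h := facCost_of_nat m2 3 12 (by decide)
  exact_mod_cast h

theorem hfc2_4 : facCost (dm m2) (4 : Fin 7) = (10 : ℝ) := by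
  have h := facCost_of_nat m2 4 10 (by decide)
  exact_mod_cast h

theorem hfc2_5 : facCost (dm m2) (5 : Fin 7) = (10 : ℝ) := by
  have h := facCost_of_nat m2 5 10 (by decide)
  exact_mod_cast h

theorem hfc2_6 : facCost (dm m2) (6 : Fin 7) = (10 : ℝ) := by
  have h := facCost_of_nat m2 6 10 (by decide)
  exact_mod_cast h

theorem hOPT2 : OPT (dm m2) = (4 : ℝ) := by
  have h := OPT_of_nat m2 2 4 (by decide) (by decide)
  exact_mod_cast h


theorem pseudo3 : IsPseudometric (dm m3) :=
  pseudo_of_nat m3 (by decide) (by decide) (by decide)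

theorem cons3 : Consistent (dm m3) sigmaStar :=
  consistent_of_nat m3 (by decide)

theorem hfc3_0 : facCost (dm m3) (0 : Fin 7) = (10 : ℝ) := by
  have h := facCost_of_nat m3 0 10 (by decide)
  exact_mod_cast h

theorem hfc3_1 : facCost (dm m3) (1 : Fin 7) = (10 : ℝ) := by
  have h := facCost_of_nat m3 1 10 (by decide)
  exact_mod_cast h

theorem hfc3_2 : facCost (dm m3) (2 : Fin 7) = (10 : ℝ) := by
  have h := facCost_of_nat m3 2 10 (by decide)
  exact_mod_cast h

theorem hfc3_3 : facCost (dm m3) (3 : Fin 7) = (4 : ℝ) := by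
  have h := facCost_of_nat m3 3 4 (by decide)
  exact_mod_cast h

theorem hfc3_4 : facCost (dm m3) (4 : Fin 7) = (10 : ℝ) := by
  have h := facCost_of_nat m3 4 10 (by decide)
  exact_mod_cast h

theorem hfc3_5 : facCost (dm m3) (5 : Fin 7) = (10 : ℝ) := by
  have h := facCost_of_nat m3 5 10 (by decide)
  exact_mod_cast h

theorem hfc3_6 : facCost (dm m3) (6 : Fin 7) = (10 : ℝ) := by
  have h := facCost_of_nat m3 6 10 (by decide)
  exact_mod_cast h

theorem hOPT3 : OPT (dm m3) = (4 : ℝ) := by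
  have h := OPT_of_nat m3 3 4 (by decide) (by decide)
  exact_mod_cast h


theorem pseudo4 : IsPseudometric (dm m4) :=
  pseudo_of_nat m4 (by decide) (by decide) (by decide)

theorem cons4 : Consistent (dm m4) sigmaStar :=
  consistent_of_nat m4 (by decide)

theorem hfc4_0 : facCost (dm m4) (0 : Fin 7) = (13 : ℝ) := by
  have h := facCost_of_nat m4 0 13 (by decide)
  exact_mod_cast h

theorem hfc4_1 : facCost (dm m4) (1 : Fin 7) = (19 : ℝ) := by
  have h := facCost_of_nat m4 1 19 (by decide)
  exact_mod_cast h

theorem hfc4_2 : facCost (dm m4) (2 : Fin 7) = (15 : ℝ) := by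
  have h := facCost_of_nat m4 2 15 (by decide)
  exact_mod_cast h

theorem hfc4_3 : facCost (dm m4) (3 : Fin 7) = (15 : ℝ) := by
  have h := facCost_of_nat m4 3 15 (by decide)
  exact_mod_cast h

theorem hfc4_4 : facCost (dm m4) (4 : Fin 7) = (7 : ℝ) := by
  have h := facCost_of_nat m4 4 7 (by decide)
  exact_mod_cast h

theorem hfc4_5 : facCost (dm m4) (5 : Fin 7) = (13 : ℝ) := by
  have h := facCost_of_nat m4 5 13 (by decide)
  exact_mod_cast h

theorem hfc4_6 : facCost (dm m4) (6 : Fin 7) = (13 : ℝ) := by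
  have h := facCost_of_nat m4 6 13 (by decide)
  exact_mod_cast h

theorem hOPT4 : OPT (dm m4) = (7 : ℝ) := by
  have h := OPT_of_nat m4 4 7 (by decide) (by decide)
  exact_mod_cast h


theorem pseudo5 : IsPseudometric (dm m5) :=
  pseudo_of_nat m5 (by decide) (by decide) (by decide)

theorem cons5 : Consistent (dm m5) sigmaStar :=
  consistent_of_nat m5 (by decide)

theorem hfc5_0 : facCost (dm m5) (0 : Fin 7) = (13 : ℝ) := by
  have h := facCost_of_nat m5 0 13 (by decide)
  exact_mod_cast h

theorem hfc5_1 : facCost (dm m5) (1 : Fin 7) = (13 : ℝ) := by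
  have h := facCost_of_nat m5 1 13 (by decide)
  exact_mod_cast h

theorem hfc5_2 : facCost (dm m5) (2 : Fin 7) = (15 : ℝ) := by
  have h := facCost_of_nat m5 2 15 (by decide)
  exact_mod_cast h

theorem hfc5_3 : facCost (dm m5) (3 : Fin 7) = (15 : ℝ) := by
  have h := facCost_of_nat m5 3 15 (by decide)
  exact_mod_cast h

theorem hfc5_4 : facCost (dm m5) (4 : Fin 7) = (15 : ℝ) := by
  have h := facCost_of_nat m5 4 15 (by decide)
  exact_mod_cast h

theorem hfc5_5 : facCost (dm m5) (5 : Fin 7) = (7 : ℝ) := by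
  have h := facCost_of_nat m5 5 7 (by decide)
  exact_mod_cast h

theorem hfc5_6 : facCost (dm m5) (6 : Fin 7) = (15 : ℝ) := by
  have h := facCost_of_nat m5 6 15 (by decide)
  exact_mod_cast h

theorem hOPT5 : OPT (dm m5) = (7 : ℝ) := by
  have h := OPT_of_nat m5 5 7 (by decide) (by decide)
  exact_mod_cast h


theorem pseudo6 : IsPseudometric (dm m6) :=
  pseudo_of_nat m6 (by decide) (by decide) (by decide)

theorem cons6 : Consistent (dm m6) sigmaStar :=
  consistent_of_nat m6 (by decide)

theorem hfc6_0 : facCost (dm m6) (0 : Fin 7) = (13 : ℝ) := by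
  have h := facCost_of_nat m6 0 13 (by decide)
  exact_mod_cast h

theorem hfc6_1 : facCost (dm m6) (1 : Fin 7) = (13 : ℝ) := by
  have h := facCost_of_nat m6 1 13 (by decide)
  exact_mod_cast h

theorem hfc6_2 : facCost (dm m6) (2 : Fin 7) = (15 : ℝ) := by
  have h := facCost_of_nat m6 2 15 (by decide)
  exact_mod_cast h

theorem hfc6_3 : facCost (dm m6) (3 : Fin 7) = (15 : ℝ) := by
  have h := facCost_of_nat m6 3 15 (by decide)
  exact_mod_cast h

theorem hfc6_4 : facCost (dm m6) (4 : Fin 7) = (15 : ℝ) := by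
  have h := facCost_of_nat m6 4 15 (by decide)
  exact_mod_cast h

theorem hfc6_5 : facCost (dm m6) (5 : Fin 7) = (13 : ℝ) := by
  have h := facCost_of_nat m6 5 13 (by decide)
  exact_mod_cast h

theorem hfc6_6 : facCost (dm m6) (6 : Fin 7) = (7 : ℝ) := by
  have h := facCost_of_nat m6 6 7 (by decide)
  exact_mod_cast h

theorem hOPT6 : OPT (dm m6) = (7 : ℝ) := by
  have h := OPT_of_nat m6 6 7 (by decide) (by decide)
  exact_mod_cast h


theorem lower_bound_for_instance (q : Fin 7 → ℝ)
    (hq0 : ∀ i, 0 ≤ q i) (hq1 : ∑ i, q i = 1) :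
    ∃ d : Pt → Pt → ℝ, IsPseudometric d ∧ Consistent d sigmaStar ∧
      0 < OPT d ∧ 2.063164 * OPT d ≤ cost d q := by
  by_contra hc
  push_neg at hc
  have h0 := hc (dm m0) pseudo0 cons0 (by rw [hOPT0]; norm_num)
  rw [hOPT0, cost_eq, Fin.sum_univ_seven, hfc0_0, hfc0_1, hfc0_2, hfc0_3, hfc0_4, hfc0_5, hfc0_6] at h0
  have h1 := hc (dm m1) pseudo1 cons1 (by rw [hOPT1]; norm_num)
  rw [hOPT1, cost_eq, Fin.sum_univ_seven, hfc1_0, hfc1_1, hfc1_2, hfc1_3, hfc1_4, hfc1_5, hfc1_6] at h1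
  have h2 := hc (dm m2) pseudo2 cons2 (by rw [hOPT2]; norm_num)
  rw [hOPT2, cost_eq, Fin.sum_univ_seven, hfc2_0, hfc2_1, hfc2_2, hfc2_3, hfc2_4, hfc2_5, hfc2_6] at h2
  have h3 := hc (dm m3) pseudo3 cons3 (by rw [hOPT3]; norm_num)
  rw [hOPT3, cost_eq, Fin.sum_univ_seven, hfc3_0, hfc3_1, hfc3_2, hfc3_3, hfc3_4, hfc3_5, hfc3_6] at h3
  have h4 := hc (dm m4) pseudo4 cons4 (by rw [hOPT4]; norm_num)
  rw [hOPT4, cost_eq, Fin.sum_univ_seven, hfc4_0, hfc4_1, hfc4_2, hfc4_3, hfc4_4, hfc4_5, hfc4_6] at h4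
  have h5 := hc (dm m5) pseudo5 cons5 (by rw [hOPT5]; norm_num)
  rw [hOPT5, cost_eq, Fin.sum_univ_seven, hfc5_0, hfc5_1, hfc5_2, hfc5_3, hfc5_4, hfc5_5, hfc5_6] at h5
  have h6 := hc (dm m6) pseudo6 cons6 (by rw [hOPT6]; norm_num)
  rw [hOPT6, cost_eq, Fin.sum_univ_seven, hfc6_0, hfc6_1, hfc6_2, hfc6_3, hfc6_4, hfc6_5, hfc6_6] at h6
  rw [Fin.sum_univ_seven] at hq1
  have h0' := hq0 0
  have h1' := hq0 1
  have h2' := hq0 2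
  have h3' := hq0 3
  have h4' := hq0 4
  have h5' := hq0 5
  have h6' := hq0 6
  linarith
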